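/- arXiv:1105.2576 — 2 statements merged into one kernel-verified Lean document; each statement's English description precedes it below -/
import Mathlib

section
/- Soundness of the property '⊥' (Lemma 4, third item): for every parsing expression e, every string s and every step count n, if ⟦e,s⟧ ⇒ (n, ⊥) (e fails on s), then e ∈ P_⊥. -/
/-- Untyped parsing expressions `Δ` over non-terminals `N` and terminals `char`. -/
inductive Delta (N char : Type) : Type where
  | eps : Delta N char
  | anyChar : Delta N char
  | terminal (a : char) : Delta N char
  | nonTerminal (A : N) : Delta N char
  | seq (e1 e2 : Delta N char) : Delta N char
  | choice (e1 e2 : Delta N char) : Delta N char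
  | star (e : Delta N char) : Delta N char
  | pnot (e : Delta N char) : Delta N char
  deriving DecidableEq

/-- Big-step semantics of PEGs: `USem P e s n r` means `⟦e,s⟧ ⇒ (n, r)`.
A result `none` is failure `⊥`; `some s'` is success `ok s'`. -/
inductive USem {N char : Type} (P : N → Delta N char) :
    Delta N char → List char → ℕ → Option (List char) → Prop where
  | eps (s : List char) : USem P .eps s 1 (some s)
  | nonTerminal {A : N} {s : List char} {m : ℕ} {r : Option (List char)} :
      USem P (P A) s m r → USem P (.nonTerminal A) s (m + 1) r
  | anyCharOk (x : char) (xs : List char) : USem P .anyChar (x :: xs) 1 (some xs)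
  | anyCharFail : USem P .anyChar [] 1 none
  | terminalOk (a : char) (xs : List char) : USem P (.terminal a) (a :: xs) 1 (some xs)
  | terminalNil (a : char) : USem P (.terminal a) [] 1 none
  | terminalMismatch {x a : char} (xs : List char) (h : x ≠ a) :
      USem P (.terminal a) (x :: xs) 1 none
  | seqFail₁ {e1 e2 : Delta N char} {s : List char} {m : ℕ} :
      USem P e1 s m none → USem P (.seq e1 e2) s (m + 1) none
  | seqNext {e1 e2 : Delta N char} {s s' : List char} {m n : ℕ} {r : Option (List char)} :
      USem P e1 s m (some s') → USem P e2 s' n r → USem P (.seq e1 e2) s (m + n + 1) r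
  | choiceOk {e1 e2 : Delta N char} {s s' : List char} {m : ℕ} :
      USem P e1 s m (some s') → USem P (.choice e1 e2) s (m + 1) (some s')
  | choiceFail₁ {e1 e2 : Delta N char} {s : List char} {m n : ℕ} {r : Option (List char)} :
      USem P e1 s m none → USem P e2 s n r → USem P (.choice e1 e2) s (m + n + 1) r
  | starBase {e : Delta N char} {s : List char} {m : ℕ} :
      USem P e s m none → USem P (.star e) s (m + 1) (some s)
  | starStep {e : Delta N char} {s s' s'' : List char} {m n : ℕ} :
      USem P e s m (some s') → USem P (.star e) s' n (some s'') →
      USem P (.star e) s (m + n + 1) (some s'')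
  | notOk {e : Delta N char} {s : List char} {m : ℕ} :
      USem P e s m none → USem P (.pnot e) s (m + 1) (some s)
  | notFail {e : Delta N char} {s s' : List char} {m : ℕ} :
      USem P e s m (some s') → USem P (.pnot e) s (m + 1) none

/-- Labels for the three expression properties: `zero` = "may succeed consuming no
input" (P₀), `pos` = "may succeed consuming some input" (P_{>0}), `fail` = "may fail" (P⊥). -/
inductive PProp : Type where
  | zero : PProp
  | pos : PProp
  | fail : PProp
  deriving DecidableEq

/-- The three property sets P₀, P_{>0} and P⊥, given as the least family of sets
closed under the inference rules of the property analysis.  (Disjunctive rules of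
the analysis are split into several constructors, which generates the same least
family of sets.) -/
inductive HasProp {N char : Type} (P : N → Delta N char) : Delta N char → PProp → Prop where
  | eps : HasProp P .eps .zero
  | anyCharPos : HasProp P .anyChar .pos
  | anyCharFail : HasProp P .anyChar .fail
  | terminalPos (a : char) : HasProp P (.terminal a) .pos
  | terminalFail (a : char) : HasProp P (.terminal a) .fail
  | starZero {e : Delta N char} : HasProp P e .fail → HasProp P (.star e) .zero
  | starPos {e : Delta N char} : HasProp P e .pos → HasProp P (.star e) .pos
  | nonTerminal {A : N} {p : PProp} : HasProp P (P A) p → HasProp P (.nonTerminal A) p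
  -- e1; e2 ∈ P⊥ if e1 ∈ P⊥ or (e1 ∈ P₀ ∪ P_{>0} and e2 ∈ P⊥)
  | seqFail₁ {e1 e2 : Delta N char} : HasProp P e1 .fail → HasProp P (.seq e1 e2) .fail
  | seqFail₂ {e1 e2 : Delta N char} :
      HasProp P e1 .zero → HasProp P e2 .fail → HasProp P (.seq e1 e2) .fail
  | seqFail₃ {e1 e2 : Delta N char} :
      HasProp P e1 .pos → HasProp P e2 .fail → HasProp P (.seq e1 e2) .fail
  -- e1; e2 ∈ P_{>0} if (e1 ∈ P_{>0} and e2 ∈ P₀ ∪ P_{>0}) or (e1 ∈ P₀ ∪ P_{>0} and e2 ∈ P_{>0})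
  | seqPos₁ {e1 e2 : Delta N char} :
      HasProp P e1 .pos → HasProp P e2 .zero → HasProp P (.seq e1 e2) .pos
  | seqPos₂ {e1 e2 : Delta N char} :
      HasProp P e1 .pos → HasProp P e2 .pos → HasProp P (.seq e1 e2) .pos
  | seqPos₃ {e1 e2 : Delta N char} :
      HasProp P e1 .zero → HasProp P e2 .pos → HasProp P (.seq e1 e2) .pos
  | seqZero {e1 e2 : Delta N char} :
      HasProp P e1 .zero → HasProp P e2 .zero → HasProp P (.seq e1 e2) .zero
  -- e1 / e2 ∈ P₀ if e1 ∈ P₀ or (e1 ∈ P⊥ and e2 ∈ P₀)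
  | choiceZero₁ {e1 e2 : Delta N char} : HasProp P e1 .zero → HasProp P (.choice e1 e2) .zero
  | choiceZero₂ {e1 e2 : Delta N char} :
      HasProp P e1 .fail → HasProp P e2 .zero → HasProp P (.choice e1 e2) .zero
  | choiceFail {e1 e2 : Delta N char} :
      HasProp P e1 .fail → HasProp P e2 .fail → HasProp P (.choice e1 e2) .fail
  -- e1 / e2 ∈ P_{>0} if e1 ∈ P_{>0} or (e1 ∈ P⊥ and e2 ∈ P_{>0})
  | choicePos₁ {e1 e2 : Delta N char} : HasProp P e1 .pos → HasProp P (.choice e1 e2) .pos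
  | choicePos₂ {e1 e2 : Delta N char} :
      HasProp P e1 .fail → HasProp P e2 .pos → HasProp P (.choice e1 e2) .pos
  | notZero {e : Delta N char} : HasProp P e .fail → HasProp P (.pnot e) .zero
  -- !e ∈ P⊥ if e ∈ P₀ ∪ P_{>0}
  | notFail₁ {e : Delta N char} : HasProp P e .zero → HasProp P (.pnot e) .fail
  | notFail₂ {e : Delta N char} : HasProp P e .pos → HasProp P (.pnot e) .fail

lemma usem_suffix {N char : Type} {P : N → Delta N char} {e : Delta N char}
    {s : List char} {n : ℕ} {r : Option (List char)}
    (h : USem P e s n r) : ∀ s', r = some s' → s' <:+ s := by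
  induction h with
  | eps => intro s' hs'; cases hs'; exact List.suffix_refl _
  | nonTerminal _ ih => exact ih
  | anyCharOk x xs => intro s' hs'; cases hs'; exact List.suffix_cons x _
  | anyCharFail => intro _ h; cases h
  | terminalOk a xs => intro s' hs'; cases hs'; exact List.suffix_cons a _
  | terminalNil => intro _ h; cases h
  | terminalMismatch => intro _ h; cases h
  | seqFail₁ => intro _ h; cases h
  | seqNext h1 h2 ih1 ih2 =>
      intro s' hs'; exact (ih2 s' hs').trans (ih1 _ rfl)
  | choiceOk h1 ih1 => exact ih1
  | choiceFail₁ h1 h2 ih1 ih2 => exact ih2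
  | starBase => intro s' hs'; cases hs'; exact List.suffix_refl _
  | starStep h1 h2 ih1 ih2 =>
      intro s' hs'; exact (ih2 s' hs').trans (ih1 _ rfl)
  | notOk => intro s' hs'; cases hs'; exact List.suffix_refl _
  | notFail => intro _ h; cases h

lemma hasProp_main {N char : Type} {P : N → Delta N char} {e : Delta N char}
    {s : List char} {n : ℕ} {r : Option (List char)} (h : USem P e s n r) :
    (r = none → HasProp P e .fail) ∧
    (∀ s', r = some s' →
      (s' = s → HasProp P e .zero) ∧ (s' ≠ s → HasProp P e .pos)) := by
  induction h with
  | eps s =>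
      refine ⟨nofun, fun s' hs' => ?_⟩
      cases hs'; exact ⟨fun _ => .eps, fun h => absurd rfl h⟩
  | nonTerminal _ ih =>
      refine ⟨fun hr => .nonTerminal (ih.1 hr), fun s' hs' => ?_⟩
      exact ⟨fun h => .nonTerminal ((ih.2 s' hs').1 h),
             fun h => .nonTerminal ((ih.2 s' hs').2 h)⟩
  | anyCharOk x xs =>
      refine ⟨nofun, fun s' hs' => ?_⟩
      cases hs'
      exact ⟨fun h => absurd (congrArg List.length h) (by simp), fun _ => .anyCharPos⟩
  | anyCharFail => exact ⟨fun _ => .anyCharFail, fun _ h => by cases h⟩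
  | terminalOk a xs =>
      refine ⟨nofun, fun s' hs' => ?_⟩
      cases hs'
      exact ⟨fun h => absurd (congrArg List.length h) (by simp), fun _ => .terminalPos a⟩
  | terminalNil a => exact ⟨fun _ => .terminalFail a, fun _ h => by cases h⟩
  | terminalMismatch xs hne => exact ⟨fun _ => .terminalFail _, fun _ h => by cases h⟩
  | seqFail₁ h1 ih1 => exact ⟨fun _ => .seqFail₁ (ih1.1 rfl), fun _ h => by cases h⟩
  | seqNext h1 h2 ih1 ih2 =>
      rename_i e1 e2 s s' m n r
      have hsuf1 := usem_suffix h1 _ rfl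
      constructor
      · intro hr
        have h2f := ih2.1 hr
        by_cases hes : s' = s
        · exact .seqFail₂ ((ih1.2 _ rfl).1 hes) h2f
        · exact .seqFail₃ ((ih1.2 _ rfl).2 hes) h2f
      · intro s'' hs''
        have hsuf2 := usem_suffix h2 _ hs''
        constructor
        · intro hss
          subst hss
          have he1 : _ = _ := hsuf1.eq_of_length_le (List.IsSuffix.length_le hsuf2)
          exact .seqZero ((ih1.2 _ rfl).1 he1) ((ih2.2 _ hs'').1 he1.symm)
        · intro hne
          by_cases hes : s' = s
          · refine .seqPos₃ ((ih1.2 _ rfl).1 hes) ((ih2.2 _ hs'').2 ?_)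
            intro hc; exact hne (hc.trans hes)
          · have hp1 := (ih1.2 _ rfl).2 hes
            by_cases hes2 : s'' = s'
            · exact .seqPos₁ hp1 ((ih2.2 _ hs'').1 hes2)
            · exact .seqPos₂ hp1 ((ih2.2 _ hs'').2 hes2)
  | choiceOk h1 ih1 =>
      refine ⟨nofun, fun s' hs' => ?_⟩
      cases hs'
      exact ⟨fun h => .choiceZero₁ ((ih1.2 _ rfl).1 h),
             fun h => .choicePos₁ ((ih1.2 _ rfl).2 h)⟩
  | choiceFail₁ h1 h2 ih1 ih2 =>
      refine ⟨fun hr => .choiceFail (ih1.1 rfl) (ih2.1 hr), fun s' hs' => ?_⟩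
      exact ⟨fun h => .choiceZero₂ (ih1.1 rfl) ((ih2.2 s' hs').1 h),
             fun h => .choicePos₂ (ih1.1 rfl) ((ih2.2 s' hs').2 h)⟩
  | starBase h1 ih1 =>
      refine ⟨nofun, fun s' hs' => ?_⟩
      cases hs'
      exact ⟨fun _ => .starZero (ih1.1 rfl), fun h => absurd rfl h⟩
  | starStep h1 h2 ih1 ih2 =>
      rename_i e s s' s'' m n
      refine ⟨nofun, fun s'' hs'' => ?_⟩
      cases hs''
      have hsuf1 := usem_suffix h1 _ rfl
      have hsuf2 := usem_suffix h2 _ rfl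
      constructor
      · intro hss
        subst hss
        have he1 : _ = _ := hsuf1.eq_of_length_le (List.IsSuffix.length_le hsuf2)
        exact (ih2.2 _ rfl).1 he1.symm
      · intro hne
        by_cases hes : s' = s
        · refine (ih2.2 _ rfl).2 ?_
          intro hc; exact hne (hc.trans hes)
        · exact .starPos ((ih1.2 _ rfl).2 hes)
  | notOk h1 ih1 =>
      refine ⟨nofun, fun s' hs' => ?_⟩
      cases hs'
      exact ⟨fun _ => .notZero (ih1.1 rfl), fun h => absurd rfl h⟩
  | notFail h1 ih1 =>
      rename_i e s s' m
      refine ⟨fun _ => ?_, fun _ h => by cases h⟩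
      by_cases hes : s' = s
      · exact .notFail₁ ((ih1.2 _ rfl).1 hes)
      · exact .notFail₂ ((ih1.2 _ rfl).2 hes)

/-- **Lemma 4, third item (soundness of the property "⊥").** If `⟦e,s⟧ ⇒ (n, ⊥)`,
i.e. `e` fails on `s`, then `e ∈ P⊥`. -/
theorem hasProp_fail_sound {N char : Type} [Fintype N] (P : N → Delta N char)
    (e : Delta N char) (s : List char) (n : ℕ)
    (h : USem P e s n none) : HasProp P e .fail := by
  exact (hasProp_main h).1 rfl
end

section
/- Correctness of the well-formedness fixpoint computation: the stabilized set of the iteration, WFexps = deriveStep^[|E(G)|](∅), coincides with the well-formed expressions of the grammar, i.e. for every parsing expression e, e ∈ WFexps if and only if e ∈ E(G) and e ∈ WF. In particular, the grammar is well-formed (every e ∈ E(G) is in WF) if and only if WFexps = E(G). -/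
/-- Well-formed parsing expressions: the least set closed under the rules of the
well-formedness analysis. -/
inductive WFexp {N char : Type} (P : N → Delta N char) : Delta N char → Prop where
  | nonTerminal {A : N} : WFexp P (P A) → WFexp P (.nonTerminal A)
  | eps : WFexp P .eps
  | anyChar : WFexp P .anyChar
  | terminal (a : char) : WFexp P (.terminal a)
  | pnot {e : Delta N char} : WFexp P e → WFexp P (.pnot e)
  | seq {e1 e2 : Delta N char} :
      WFexp P e1 → (HasProp P e1 .zero → WFexp P e2) → WFexp P (.seq e1 e2)
  | choice {e1 e2 : Delta N char} : WFexp P e1 → WFexp P e2 → WFexp P (.choice e1 e2)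
  | star {e : Delta N char} : WFexp P e → ¬ HasProp P e .zero → WFexp P (.star e)

/-- The finite set of all (non-strict) subexpressions of a parsing expression. -/
def subExps {N char : Type} [DecidableEq N] [DecidableEq char] :
    Delta N char → Finset (Delta N char)
  | .eps => {.eps}
  | .anyChar => {.anyChar}
  | .terminal a => {.terminal a}
  | .nonTerminal A => {.nonTerminal A}
  | .seq e1 e2 => insert (.seq e1 e2) (subExps e1 ∪ subExps e2)
  | .choice e1 e2 => insert (.choice e1 e2) (subExps e1 ∪ subExps e2)
  | .star e => insert (.star e) (subExps e)
  | .pnot e => insert (.pnot e) (subExps e)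

/-- The expression set E(G) of the grammar: all subexpressions of `P A`, over all
non-terminals `A`. -/
def EG {N char : Type} [Fintype N] [DecidableEq N] [DecidableEq char]
    (P : N → Delta N char) : Finset (Delta N char) :=
  Finset.univ.biUnion fun A => subExps (P A)

/-- `OneStep P S e` : `e` is derivable as well-formed in one step from the
expressions in `S`. -/
def OneStep {N char : Type} [DecidableEq N] [DecidableEq char]
    (P : N → Delta N char) (S : Finset (Delta N char)) : Delta N char → Prop
  | .eps => True
  | .anyChar => True
  | .terminal _ => True
  | .nonTerminal A => P A ∈ S
  | .pnot e => e ∈ S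
  | .seq e1 e2 => e1 ∈ S ∧ (HasProp P e1 .zero → e2 ∈ S)
  | .choice e1 e2 => e1 ∈ S ∧ e2 ∈ S
  | .star e => e ∈ S ∧ ¬ HasProp P e .zero

open Classical in
/-- One step of the well-formedness fixpoint computation: extend `S` by all
expressions of E(G) derivable in one step from `S`. -/
noncomputable def deriveStep {N char : Type} [Fintype N] [DecidableEq N] [DecidableEq char]
    (P : N → Delta N char) (S : Finset (Delta N char)) : Finset (Delta N char) :=
  S ∪ (EG P).filter (OneStep P S)

section Aux

variable {N char : Type} [DecidableEq N] [DecidableEq char]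

lemma self_mem_subExps (e : Delta N char) : e ∈ subExps e := by
  cases e <;> simp [subExps]

lemma subExps_trans : ∀ e e' : Delta N char, e' ∈ subExps e → subExps e' ⊆ subExps e := by
  intro e
  induction e with
  | eps => intro e' h; simp [subExps] at h; subst h; simp [subExps]
  | anyChar => intro e' h; simp [subExps] at h; subst h; simp [subExps]
  | terminal a => intro e' h; simp [subExps] at h; subst h; simp [subExps]
  | nonTerminal A => intro e' h; simp [subExps] at h; subst h; simp [subExps]
  | seq e1 e2 ih1 ih2 =>
      intro e' h; simp [subExps] at h
      rcases h with h | h | h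
      · subst h; exact Finset.Subset.refl _
      · intro x hx; simp [subExps]; exact Or.inr (Or.inl (ih1 e' h hx))
      · intro x hx; simp [subExps]; exact Or.inr (Or.inr (ih2 e' h hx))
  | choice e1 e2 ih1 ih2 =>
      intro e' h; simp [subExps] at h
      rcases h with h | h | h
      · subst h; exact Finset.Subset.refl _
      · intro x hx; simp [subExps]; exact Or.inr (Or.inl (ih1 e' h hx))
      · intro x hx; simp [subExps]; exact Or.inr (Or.inr (ih2 e' h hx))
  | star e ih =>
      intro e' h; simp [subExps] at h
      rcases h with h | h
      · subst h; exact Finset.Subset.refl _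
      · intro x hx; simp [subExps]; exact Or.inr (ih e' h hx)
  | pnot e ih =>
      intro e' h; simp [subExps] at h
      rcases h with h | h
      · subst h; exact Finset.Subset.refl _
      · intro x hx; simp [subExps]; exact Or.inr (ih e' h hx)

variable [Fintype N] (P : N → Delta N char)

lemma PA_mem_EG (A : N) : P A ∈ EG P :=
  Finset.mem_biUnion.mpr ⟨A, Finset.mem_univ A, self_mem_subExps _⟩

lemma subExps_subset_EG {e : Delta N char} (h : e ∈ EG P) : subExps e ⊆ EG P := by
  obtain ⟨A, -, hA⟩ := Finset.mem_biUnion.mp h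
  intro x hx
  exact Finset.mem_biUnion.mpr ⟨A, Finset.mem_univ A, subExps_trans _ _ hA hx⟩

lemma subset_deriveStep (S : Finset (Delta N char)) : S ⊆ deriveStep P S :=
  Finset.subset_union_left

lemma deriveStep_subset_EG {S : Finset (Delta N char)} (h : S ⊆ EG P) :
    deriveStep P S ⊆ EG P := by
  classical
  unfold deriveStep
  exact Finset.union_subset h (Finset.filter_subset _ _)

lemma mem_deriveStep {S : Finset (Delta N char)} {e : Delta N char} :
    e ∈ deriveStep P S ↔ e ∈ S ∨ (e ∈ EG P ∧ OneStep P S e) := by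
  classical
  unfold deriveStep
  simp [Finset.mem_union, Finset.mem_filter]

lemma iter_subset_EG : ∀ k, (deriveStep P)^[k] ∅ ⊆ EG P := by
  intro k
  induction k with
  | zero => simp
  | succ k ih => rw [Function.iterate_succ_apply']; exact deriveStep_subset_EG P ih

lemma iter_sound : ∀ k, ∀ e ∈ (deriveStep P)^[k] ∅, WFexp P e := by
  intro k
  induction k with
  | zero => simp
  | succ k ih =>
      intro e he
      rw [Function.iterate_succ_apply', mem_deriveStep] at he
      rcases he with he | ⟨_, hone⟩
      · exact ih e he
      · cases e with
        | eps => exact .eps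
        | anyChar => exact .anyChar
        | terminal a => exact .terminal a
        | nonTerminal A => exact .nonTerminal (ih _ hone)
        | pnot e => exact .pnot (ih _ hone)
        | seq e1 e2 => exact .seq (ih _ hone.1) (fun hz => ih _ (hone.2 hz))
        | choice e1 e2 => exact .choice (ih _ hone.1) (ih _ hone.2)
        | star e => exact .star (ih _ hone.1) hone.2

lemma iter_stab {k : ℕ}
    (h : (deriveStep P)^[k] ∅ = (deriveStep P)^[k+1] ∅) :
    ∀ m, (deriveStep P)^[k+m] ∅ = (deriveStep P)^[k] ∅ := by
  intro m
  induction m with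
  | zero => rfl
  | succ m ih =>
      rw [← Nat.add_assoc, Function.iterate_succ_apply', ih,
        ← Function.iterate_succ_apply' (deriveStep P) k ∅, ← h]

lemma iter_card_ge (k : ℕ)
    (h : ∀ j < k, (deriveStep P)^[j] ∅ ≠ (deriveStep P)^[j+1] ∅) :
    k ≤ ((deriveStep P)^[k] ∅).card := by
  induction k with
  | zero => simp
  | succ k ih =>
      have h1 : (deriveStep P)^[k] ∅ ⊂ (deriveStep P)^[k+1] ∅ := by
        refine Finset.ssubset_iff_subset_ne.mpr ⟨?_, h k (Nat.lt_succ_self k)⟩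
        rw [Function.iterate_succ_apply']
        exact subset_deriveStep P _
      have h2 := Finset.card_lt_card h1
      have h3 := ih (fun j hj => h j (Nat.lt_succ_of_lt hj))
      omega

lemma iter_fixpoint :
    deriveStep P ((deriveStep P)^[(EG P).card] ∅) = (deriveStep P)^[(EG P).card] ∅ := by
  rw [← Function.iterate_succ_apply' (deriveStep P) (EG P).card ∅]
  set n := (EG P).card with hn
  by_contra hne
  have hall : ∀ j < n + 1, (deriveStep P)^[j] ∅ ≠ (deriveStep P)^[j+1] ∅ := by
    intro j hj heq
    apply hne
    have h1 := iter_stab P heq (n - j)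
    have h2 := iter_stab P heq (n + 1 - j)
    rw [Nat.add_sub_cancel' (by omega : j ≤ n)] at h1
    rw [Nat.add_sub_cancel' (by omega : j ≤ n + 1)] at h2
    rw [h1, h2]
  have := iter_card_ge P (n + 1) hall
  have hle : ((deriveStep P)^[n+1] ∅).card ≤ n :=
    Finset.card_le_card (iter_subset_EG P (n + 1))
  omega

lemma iter_complete {e : Delta N char} (hwf : WFexp P e) :
    e ∈ EG P → e ∈ (deriveStep P)^[(EG P).card] ∅ := by
  have hfix := iter_fixpoint P
  set S := (deriveStep P)^[(EG P).card] ∅ with hS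
  have closed : ∀ e ∈ EG P, OneStep P S e → e ∈ S := by
    intro e heg hone
    rw [← hfix, mem_deriveStep]
    exact Or.inr ⟨heg, hone⟩
  induction hwf with
  | @nonTerminal A _ ih =>
      intro he
      exact closed _ he (ih (PA_mem_EG P A))
  | eps => intro he; exact closed _ he trivial
  | anyChar => intro he; exact closed _ he trivial
  | terminal a => intro he; exact closed _ he trivial
  | @pnot e _ ih =>
      intro he
      have he' : e ∈ EG P := subExps_subset_EG P he (by simp [subExps, self_mem_subExps])
      exact closed _ he (ih he')
  | @seq e1 e2 _ _ ih1 ih2 =>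
      intro he
      have h1 : e1 ∈ EG P := subExps_subset_EG P he (by simp [subExps, self_mem_subExps])
      have h2 : e2 ∈ EG P := subExps_subset_EG P he (by simp [subExps, self_mem_subExps])
      exact closed _ he ⟨ih1 h1, fun hz => ih2 hz h2⟩
  | @choice e1 e2 _ _ ih1 ih2 =>
      intro he
      have h1 : e1 ∈ EG P := subExps_subset_EG P he (by simp [subExps, self_mem_subExps])
      have h2 : e2 ∈ EG P := subExps_subset_EG P he (by simp [subExps, self_mem_subExps])
      exact closed _ he ⟨ih1 h1, ih2 h2⟩
  | @star e _ hz ih =>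
      intro he
      have h1 : e ∈ EG P := subExps_subset_EG P he (by simp [subExps, self_mem_subExps])
      exact closed _ he ⟨ih h1, hz⟩

end Aux

/-- **Correctness of the well-formedness fixpoint computation:** the stabilized set
`WFexps = deriveStep^[|E(G)|](∅)` consists exactly of the expressions of E(G) that
are well-formed; in particular the grammar is well-formed iff `WFexps = E(G)`. -/
theorem deriveStep_fixpoint_correct {N char : Type}
    [Fintype N] [DecidableEq N] [DecidableEq char] (P : N → Delta N char) :
    (∀ e : Delta N char,
        e ∈ (deriveStep P)^[(EG P).card] ∅ ↔ e ∈ EG P ∧ WFexp P e) ∧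
    ((∀ e ∈ EG P, WFexp P e) ↔ (deriveStep P)^[(EG P).card] ∅ = EG P) := by
  have main : ∀ e : Delta N char,
      e ∈ (deriveStep P)^[(EG P).card] ∅ ↔ e ∈ EG P ∧ WFexp P e := by
    intro e
    constructor
    · intro h
      exact ⟨iter_subset_EG P _ h, iter_sound P _ e h⟩
    · rintro ⟨h1, h2⟩
      exact iter_complete P h2 h1
  refine ⟨main, ?_, ?_⟩
  · intro h
    apply Finset.Subset.antisymm (iter_subset_EG P _)
    intro e he
    exact (main e).mpr ⟨he, h e he⟩
  · intro h e he
    rw [← h] at he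
    exact ((main e).mp he).2
end
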